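/- arXiv:1905.08149 — 2 statements merged into one kernel-verified Lean document; each statement's English description precedes it below -/
import Mathlib

section
/- Let X ⊂ P^r be an integral non-degenerate variety. Fix q ∈ P^r with X-rank x := r_X(q). If ρ'(X) ≥ 2x, then there is exactly one set S ⊂ X with |S| = x and q ∈ ⟨S⟩; i.e., |𝒮(X,q)| = 1. -/
open MvPolynomial

noncomputable section

namespace Dep

variable (K : Type) [Field K]

/-- `PS K n` is the projective space of lines in `K^n`, i.e. `ℙ^{n-1}`. -/
abbrev PS (n : ℕ) := Projectivization K (Fin n → K)

/-- The projective zero locus of a (homogeneous) polynomial. -/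
def zeros {n : ℕ} (f : MvPolynomial (Fin n) K) : Set (PS K n) :=
  {p | ∀ v : Fin n → K, ∀ hv : v ≠ 0, Projectivization.mk K v hv = p → eval v f = 0}

/-- Zariski-closed subsets of projective space: common zero loci of families of
homogeneous polynomials. -/
def IsZClosed {n : ℕ} (X : Set (PS K n)) : Prop :=
  ∃ F : Set (MvPolynomial (Fin n) K), (∀ f ∈ F, ∃ d, f.IsHomogeneous d) ∧
    X = ⋂ f ∈ F, zeros K f

/-- Irreducible closed subsets. -/
def IsIrredClosed {n : ℕ} (X : Set (PS K n)) : Prop :=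
  X.Nonempty ∧ IsZClosed K X ∧
    ∀ C₁ C₂ : Set (PS K n), IsZClosed K C₁ → IsZClosed K C₂ → X ⊆ C₁ ∪ C₂ →
      X ⊆ C₁ ∨ X ⊆ C₂

/-- Zariski closure. -/
def zclosure {n : ℕ} (S : Set (PS K n)) : Set (PS K n) :=
  ⋂₀ {C | IsZClosed K C ∧ S ⊆ C}

/-- Dimension of a subset of projective space: the supremum of lengths of strict chains
of irreducible closed subsets contained in it. -/
def zdim {n : ℕ} (X : Set (PS K n)) : ℕ :=
  sSup {m | ∃ C : Fin (m + 1) → Set (PS K n),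
    (∀ i, IsIrredClosed K (C i) ∧ C i ⊆ X) ∧
    ∀ i j : Fin (m + 1), i < j → C i ⊂ C j}

/-- The linear subspace of `K^n` spanned by (representatives of) a set of projective points. -/
def projSpan {n : ℕ} (S : Set (PS K n)) : Submodule K (Fin n → K) :=
  Submodule.span K (Projectivization.rep '' S)

/-- The projective linear span of a set of projective points, as a set of points. -/
def spanSet {n : ℕ} (S : Set (PS K n)) : Set (PS K n) :=
  {p | p.rep ∈ projSpan K S}

/-- Non-degenerate: not contained in any hyperplane, i.e. the points span everything. -/
def Nondeg {n : ℕ} (X : Set (PS K n)) : Prop := projSpan K X = ⊤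

/-- An integral non-degenerate projective variety in `ℙ^{n-1}`. -/
def IsVariety {n : ℕ} (X : Set (PS K n)) : Prop :=
  IsIrredClosed K X ∧ Nondeg K X

/-- A finite set of projective points is linearly independent if its span has dimension
(as a vector subspace) equal to its cardinality. -/
def LinIndepSet {n : ℕ} (S : Finset (PS K n)) : Prop :=
  Module.finrank K (projSpan K (S : Set (PS K n))) = S.card

/-- `ρ'(X)`: the maximal `t > 0` such that every subset of `X` with at most `t` points is
linearly independent. -/
def rho' {n : ℕ} (X : Set (PS K n)) : ℕ :=
  sSup {t | 0 < t ∧ ∀ S : Finset (PS K n), ↑S ⊆ X → S.card ≤ t → LinIndepSet K S}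

/- ### Zero-dimensional subschemes, via homogeneous ideals -/

/-- A homogeneous ideal. -/
def IsHomogIdeal {n : ℕ} (I : Ideal (MvPolynomial (Fin n) K)) : Prop :=
  ∀ f ∈ I, ∀ d : ℕ, homogeneousComponent d f ∈ I

/-- The homogeneous vanishing ideal of a set of projective points. -/
def hVanish {n : ℕ} (S : Set (PS K n)) : Ideal (MvPolynomial (Fin n) K) :=
  Ideal.span {f | (∃ d, f.IsHomogeneous d) ∧ S ⊆ zeros K f}

/-- The Hilbert function of (the subscheme defined by) a homogeneous ideal: the dimension of
the degree-`m` graded piece of the quotient ring. -/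
def hilb {n : ℕ} (I : Ideal (MvPolynomial (Fin n) K)) (m : ℕ) : ℕ :=
  Module.finrank K (Submodule.map (Ideal.Quotient.mkₐ K I).toLinearMap
    (homogeneousSubmodule (Fin n) K m))

/-- The subscheme defined by `I` is zero-dimensional of degree `d`: the Hilbert function is
eventually constant, equal to `d`. -/
def SchemeDeg {n : ℕ} (I : Ideal (MvPolynomial (Fin n) K)) (d : ℕ) : Prop :=
  ∃ N, ∀ m ≥ N, hilb K I m = d

/-- The subscheme defined by `I` lies in `X`. -/
def SubschemeOf {n : ℕ} (X : Set (PS K n)) (I : Ideal (MvPolynomial (Fin n) K)) : Prop :=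
  hVanish K X ≤ I

/-- The degree-one part of a homogeneous ideal, i.e. the linear forms vanishing on the
corresponding subscheme. -/
def degOnePart {n : ℕ} (I : Ideal (MvPolynomial (Fin n) K)) :
    Submodule K (MvPolynomial (Fin n) K) :=
  homogeneousSubmodule (Fin n) K 1 ⊓ I.restrictScalars K

/-- A zero-dimensional subscheme of degree `d` of `ℙ^{n-1}` is linearly independent iff its
projective span has dimension `d - 1`, i.e. exactly `n - d` independent linear forms vanish
on it. -/
def SchemeLinIndep {n : ℕ} (I : Ideal (MvPolynomial (Fin n) K)) (d : ℕ) : Prop :=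
  Module.finrank K (degOnePart K I) = n - d

/-- The projective linear span of the subscheme defined by `I`: the common zero locus of the
linear forms in `I`. -/
def schemeSpan {n : ℕ} (I : Ideal (MvPolynomial (Fin n) K)) : Set (PS K n) :=
  {p | ∀ f ∈ I, f.IsHomogeneous 1 → p ∈ zeros K f}

/-- The set-theoretic zero locus of an ideal. -/
def idealZeros {n : ℕ} (I : Ideal (MvPolynomial (Fin n) K)) : Set (PS K n) :=
  {p | ∀ f ∈ I, ∀ m : ℕ, p ∈ zeros K (homogeneousComponent m f)}

/-- The subscheme defined by `I` is reduced: `I` is the full vanishing ideal of its zero set. -/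
def IsReducedScheme {n : ℕ} (I : Ideal (MvPolynomial (Fin n) K)) : Prop :=
  I = hVanish K (idealZeros K I)

/- ### Smoothability: flat limits of reduced finite subsets -/

/-- Specialisation of a one-parameter family of ideals at `c : K`. -/
def fiberAt {n : ℕ} (J : Ideal (MvPolynomial (Fin n) (Polynomial K))) (c : K) :
    Ideal (MvPolynomial (Fin n) K) :=
  Ideal.map (MvPolynomial.map (Polynomial.evalRingHom c)) J

/-- `Z` (given by `I`, of degree `d`) is smoothable in `X`: either `Z` is already a reduced set
of `d` points of `X`, or `Z` is the flat limit at `0` of a one-parameter family whose general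
member is a reduced set of `d` points of `X`.  Flatness over `K[t]` is encoded as
torsion-freeness of the quotient. -/
def SmoothableIn {n : ℕ} (X : Set (PS K n)) (I : Ideal (MvPolynomial (Fin n) K)) (d : ℕ) :
    Prop :=
  (∃ S : Finset (PS K n), ↑S ⊆ X ∧ S.card = d ∧ I = hVanish K (S : Set (PS K n))) ∨
  ∃ J : Ideal (MvPolynomial (Fin n) (Polynomial K)),
    (∀ f ∈ J, ∀ m : ℕ, homogeneousComponent m f ∈ J) ∧
    (∀ p : Polynomial K, p ≠ 0 → ∀ f, MvPolynomial.C p * f ∈ J → f ∈ J) ∧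
    fiberAt K J 0 = I ∧
    ∃ E : Set K, E.Finite ∧ ∀ c : K, c ∉ E →
      ∃ S : Finset (PS K n), ↑S ⊆ X ∧ S.card = d ∧
        fiberAt K J c = hVanish K (S : Set (PS K n))

/-- `ρ''(X)`: the maximal `t > 0` such that every zero-dimensional subscheme of `X` of degree
at most `t` which is smoothable in `X` is linearly independent. -/
def rho'' {n : ℕ} (X : Set (PS K n)) : ℕ :=
  sSup {t | 0 < t ∧ ∀ (I : Ideal (MvPolynomial (Fin n) K)) (d : ℕ),
    IsHomogIdeal K I → SubschemeOf K X I → SchemeDeg K I d → SmoothableIn K X I d →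
    d ≤ t → SchemeLinIndep K I d}

/-- `ρ(X)`: the maximal `t > 0` such that every zero-dimensional subscheme of `X` of degree
at most `t` is linearly independent. -/
def rho {n : ℕ} (X : Set (PS K n)) : ℕ :=
  sSup {t | 0 < t ∧ ∀ (I : Ideal (MvPolynomial (Fin n) K)) (d : ℕ),
    IsHomogIdeal K I → SubschemeOf K X I → SchemeDeg K I d →
    d ≤ t → SchemeLinIndep K I d}

/- ### Ranks and secant varieties -/

/-- The `X`-rank of a point `q`. -/
def Xrank {n : ℕ} (X : Set (PS K n)) (q : PS K n) : ℕ :=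
  sInf {t | 0 < t ∧ ∃ S : Finset (PS K n), ↑S ⊆ X ∧ S.card = t ∧ q ∈ spanSet K ↑S}

/-- `𝒮(X,q)`: the set of finite subsets of `X` of minimal cardinality whose span contains `q`. -/
def Sq {n : ℕ} (X : Set (PS K n)) (q : PS K n) : Set (Finset (PS K n)) :=
  {S | ↑S ⊆ X ∧ S.card = Xrank K X q ∧ q ∈ spanSet K ↑S}

/-- The `k`-th secant variety of `X`. -/
def secant {n : ℕ} (X : Set (PS K n)) (k : ℕ) : Set (PS K n) :=
  zclosure K (⋃ S ∈ {S : Finset (PS K n) | ↑S ⊆ X ∧ S.card = k}, spanSet K (S : Set (PS K n)))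

/-- The generic `X`-rank: the least `k` with `σ_k(X) = ℙ^{n-1}`. -/
def genRank {n : ℕ} (X : Set (PS K n)) : ℕ :=
  sInf {k | 0 < k ∧ secant K X k = Set.univ}

/-- The border `X`-rank of a point. -/
def borderRank {n : ℕ} (X : Set (PS K n)) (q : PS K n) : ℕ :=
  sInf {k | 0 < k ∧ q ∈ secant K X k}

/-- `X ⊆ ℙ^{m-1}` of dimension `dX` is not defective: every secant variety has the expected
dimension. -/
def NotDefective {m : ℕ} (X : Set (PS K m)) (dX : ℕ) : Prop :=
  ∀ k : ℕ, 0 < k → zdim K (secant K X k) = min (m - 1) (k * (dX + 1) - 1)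

/- ### Rational normal curves -/

/-- `X ⊆ ℙ^{n-1}` is a rational normal curve: up to a linear change of coordinates it is the
image of `ℙ^1` under the degree-`(n-1)` Veronese map. -/
def IsRNC {n : ℕ} (X : Set (PS K n)) : Prop :=
  ∃ g : (Fin n → K) ≃ₗ[K] (Fin n → K),
    X = {p | ∃ v : Fin 2 → K,
      ∃ hv : g (fun i => v 0 ^ (i : ℕ) * v 1 ^ (n - 1 - (i : ℕ))) ≠ 0,
      p = Projectivization.mk K (g (fun i => v 0 ^ (i : ℕ) * v 1 ^ (n - 1 - (i : ℕ)))) hv}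

/- ### Linear projections and linear normality -/

/-- The pull-back map on polynomials induced by a linear map `π : K^{n+1} → K^n`. -/
def pullback {n m : ℕ} (π : (Fin m → K) →ₗ[K] (Fin n → K)) :
    MvPolynomial (Fin n) K →ₐ[K] MvPolynomial (Fin m) K :=
  aeval (fun i => ∑ j : Fin m, MvPolynomial.C (π (Pi.single j 1) i) * MvPolynomial.X j)

/-- The image of a set of points under the projection induced by `π`. -/
def projImage {n m : ℕ} (π : (Fin m → K) →ₗ[K] (Fin n → K)) (Y : Set (PS K m)) :
    Set (PS K n) :=
  {q | ∃ p ∈ Y, ∃ h : π p.rep ≠ 0, q = Projectivization.mk K (π p.rep) h}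

/-- The linear projection from the point `o` (encoded by the linear map `π` with kernel the
line of `o`) restricts to an embedding of `Y`: `o ∉ Y` and `o` lies on no secant or tangent
line of `Y`, i.e. on the span of no degree-2 subscheme of `Y`. -/
def EmbedsFrom {n : ℕ} (π : (Fin (n + 1) → K) →ₗ[K] (Fin n → K)) (o : PS K (n + 1))
    (Y : Set (PS K (n + 1))) : Prop :=
  Function.Surjective π ∧
  LinearMap.ker π = Submodule.span K {o.rep} ∧ o ∉ Y ∧
  ∀ I : Ideal (MvPolynomial (Fin (n + 1)) K),
    IsHomogIdeal K I → SubschemeOf K Y I → SchemeDeg K I 2 → o ∉ schemeSpan K I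

/-- `X ⊆ ℙ^{n-1}` is linearly normal: it is not an isomorphic linear projection of a
non-degenerate variety in `ℙ^n`. -/
def LinearlyNormal {n : ℕ} (X : Set (PS K n)) : Prop :=
  ¬ ∃ (Y : Set (PS K (n + 1))) (o : PS K (n + 1))
      (π : (Fin (n + 1) → K) →ₗ[K] (Fin n → K)),
      IsVariety K Y ∧ EmbedsFrom K π o Y ∧ projImage K π Y = X

/- ### Tangent spaces and smooth points -/

/-- The (affine cone over the) embedded tangent space of `X` at `p`: the common kernel of the
differentials at `p` of all elements of the vanishing ideal of `X`. -/
def tangentSub {n : ℕ} (X : Set (PS K n)) (p : PS K n) : Submodule K (Fin n → K) :=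
  ⨅ f ∈ hVanish K X, LinearMap.ker
    (∑ j : Fin n, eval p.rep (pderiv j f) • (LinearMap.proj j : (Fin n → K) →ₗ[K] K))

/-- `p` is a smooth point of `X`. -/
def SmoothAt {n : ℕ} (X : Set (PS K n)) (p : PS K n) : Prop :=
  p ∈ X ∧ Module.finrank K (tangentSub K X p) = zdim K X + 1

/-- A smooth integral non-degenerate projective variety. -/
def SmoothVariety {n : ℕ} (X : Set (PS K n)) : Prop :=
  IsVariety K X ∧ ∀ p ∈ X, SmoothAt K X p


lemma span_inter_le {V ι : Type*} [AddCommGroup V] [Module K V]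
    (v : ι → V) (hv : LinearIndependent K v) (s t : Set ι) :
    Submodule.span K (v '' s) ⊓ Submodule.span K (v '' t) ≤ Submodule.span K (v '' (s ∩ t)) := by
  intro y hy
  rw [Submodule.mem_inf] at hy
  obtain ⟨hys, hyt⟩ := hy
  have hs : Submodule.span K (v '' s)
      = Submodule.span K (v '' (s ∩ t)) ⊔ Submodule.span K (v '' (s \ t)) := by
    rw [← Submodule.span_union, ← Set.image_union]
    congr 1
    rw [Set.inter_union_diff]
  have ht : Submodule.span K (v '' t)
      = Submodule.span K (v '' (s ∩ t)) ⊔ Submodule.span K (v '' (t \ s)) := by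
    rw [← Submodule.span_union, ← Set.image_union]
    congr 2
    rw [Set.inter_comm, Set.inter_union_diff]
  rw [hs, Submodule.mem_sup] at hys
  rw [ht, Submodule.mem_sup] at hyt
  obtain ⟨a, ha, b, hb, rfl⟩ := hys
  obtain ⟨a', ha', b', hb', hab⟩ := hyt
  have hbt : b ∈ Submodule.span K (v '' t) := by
    have hbe : b = (a' - a) + b' := by linear_combination (norm := abel) hab.symm
    rw [hbe, ht]
    exact Submodule.add_mem_sup (sub_mem ha' ha) hb'
  have hdisj : Disjoint (Submodule.span K (v '' (s \ t))) (Submodule.span K (v '' t)) :=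
    hv.disjoint_span_image Set.disjoint_sdiff_left
  have hb0 : b = 0 := Submodule.disjoint_def.mp hdisj b hb hbt
  rw [hb0, add_zero]
  exact ha

/-- If `ρ'(X) ≥ 2·r_X(q)`, then `q` has a unique minimal decomposition:
`|𝒮(X,q)| = 1`. -/
theorem statement2 [IsAlgClosed K] (r : ℕ) (X : Set (PS K (r + 1))) (hX : IsVariety K X)
    (q : PS K (r + 1)) (x : ℕ) (hx : Xrank K X q = x)
    (hex : ∃ S : Finset (PS K (r + 1)), ↑S ⊆ X ∧ S.card = x ∧ q ∈ spanSet K ↑S)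
    (h : 2 * x ≤ rho' K X) :
    ∃! S : Finset (PS K (r + 1)), S ∈ Sq K X q := by
  classical
  obtain ⟨S₀, hS₀X, hS₀c, hS₀s⟩ := hex
  have hS₀ : S₀ ∈ Sq K X q := ⟨hS₀X, by rw [hx]; exact hS₀c, hS₀s⟩
  have key : ∀ S : Finset (PS K (r + 1)), ↑S ⊆ X → S.card ≤ 2 * x → LinIndepSet K S := by
    intro S hSX hSc
    set T := {t | 0 < t ∧ ∀ S : Finset (PS K (r + 1)), ↑S ⊆ X → S.card ≤ t → LinIndepSet K S}
      with hT
    have h' : 2 * x ≤ sSup T := h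
    rcases Set.eq_empty_or_nonempty T with he | hne
    · have h0 : (2 * x : ℕ) ≤ 0 := by rw [he] at h'; simpa using h'
      have hS0 : S = ∅ := Finset.card_eq_zero.mp (by omega)
      subst hS0
      unfold LinIndepSet projSpan
      simp
    by_cases hbdd : BddAbove T
    · have hmem := Nat.sSup_mem hne hbdd
      exact hmem.2 S hSX (le_trans hSc h')
    · rw [not_bddAbove_iff] at hbdd
      obtain ⟨t, ht, htc⟩ := hbdd S.card
      exact ht.2 S hSX htc.le
  have uniq : ∀ A B : Finset (PS K (r + 1)), A ∈ Sq K X q → B ∈ Sq K X q → A = B := by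
    intro A B hA hB
    obtain ⟨hAX, hAc, hAs⟩ := hA
    obtain ⟨hBX, hBc, hBs⟩ := hB
    rw [hx] at hAc hBc
    rcases Nat.eq_zero_or_pos x with hx0 | hxpos
    · rw [hx0, Finset.card_eq_zero] at hAc hBc
      rw [hAc, hBc]
    set U := A ∪ B with hU
    have hUX : ↑U ⊆ X := by
      rw [hU, Finset.coe_union]
      exact Set.union_subset hAX hBX
    have hUc : U.card ≤ 2 * x := le_trans (Finset.card_union_le A B) (by omega)
    have hLI := key U hUX hUc
    set v : {p // p ∈ U} → (Fin (r + 1) → K) := fun p => (p : PS K (r + 1)).rep with hv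
    have hvind : LinearIndependent K v := by
      rw [linearIndependent_iff_card_eq_finrank_span]
      have hrange : Set.range v = Projectivization.rep '' (U : Set (PS K (r + 1))) := by
        ext w
        constructor
        · rintro ⟨p, rfl⟩
          exact ⟨↑p, p.2, rfl⟩
        · rintro ⟨p, hp, rfl⟩
          exact ⟨⟨p, hp⟩, rfl⟩
      rw [hrange, Fintype.card_coe]
      exact hLI.symm
    set sA : Set {p // p ∈ U} := {p | ↑p ∈ A} with hsA
    set sB : Set {p // p ∈ U} := {p | ↑p ∈ B} with hsB
    have himA : v '' sA = Projectivization.rep '' (A : Set (PS K (r + 1))) := by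
      ext w
      constructor
      · rintro ⟨p, hp, rfl⟩
        exact ⟨↑p, hp, rfl⟩
      · rintro ⟨p, hp, rfl⟩
        exact ⟨⟨p, Finset.mem_union_left _ hp⟩, hp, rfl⟩
    have himB : v '' sB = Projectivization.rep '' (B : Set (PS K (r + 1))) := by
      ext w
      constructor
      · rintro ⟨p, hp, rfl⟩
        exact ⟨↑p, hp, rfl⟩
      · rintro ⟨p, hp, rfl⟩
        exact ⟨⟨p, Finset.mem_union_right _ hp⟩, hp, rfl⟩
    have himAB : v '' (sA ∩ sB) = Projectivization.rep '' ((A ∩ B) : Set (PS K (r + 1))) := by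
      ext w
      constructor
      · rintro ⟨p, ⟨hp1, hp2⟩, rfl⟩
        exact ⟨↑p, ⟨hp1, hp2⟩, rfl⟩
      · rintro ⟨p, hp, rfl⟩
        exact ⟨⟨p, Finset.mem_union_left _ hp.1⟩, ⟨hp.1, hp.2⟩, rfl⟩
    have hq : q.rep ∈ Submodule.span K (v '' (sA ∩ sB)) := by
      apply span_inter_le K v hvind sA sB
      rw [Submodule.mem_inf, himA, himB]
      exact ⟨hAs, hBs⟩
    rw [himAB, ← Finset.coe_inter] at hq
    have hq' : q ∈ spanSet K ↑(A ∩ B) := hq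
    have hne : (A ∩ B).Nonempty := by
      rcases Finset.eq_empty_or_nonempty (A ∩ B) with he | hne
      · exfalso
        rw [he] at hq
        simp only [Finset.coe_empty, Set.image_empty, Submodule.span_empty,
          Submodule.mem_bot] at hq
        exact Projectivization.rep_nonzero q hq
      · exact hne
    have hxle : x ≤ (A ∩ B).card := by
      rw [← hx]
      exact Nat.sInf_le ⟨Finset.card_pos.mpr hne,
        A ∩ B, le_trans (by exact_mod_cast Finset.inter_subset_left) hAX, rfl, hq'⟩
    have hAB : A ∩ B = A :=
      Finset.eq_of_subset_of_card_le Finset.inter_subset_left (by omega)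
    have hBA : A ∩ B = B :=
      Finset.eq_of_subset_of_card_le Finset.inter_subset_right (by omega)
    rw [← hAB, hBA]
  exact ⟨S₀, hS₀, fun B hB => uniq B S₀ hB hS₀⟩


end Dep
end
end

section
/- Let A, B be finite subsets of P^r, each linearly independent, with q ∈ ⟨A⟩ ∩ ⟨B⟩, where A and B are of minimal cardinality among sets whose span contains q. If A ∪ B is linearly independent, then A = B. -/
open MvPolynomial

noncomputable section

namespace Dep

variable (K : Type) [Field K]

theorem _root_.LinearIndepOn.span_image_inter_eq {R M ι : Type*} [Semiring R]
    [AddCommMonoid M] [Module R M] {v : ι → M} {s t : Set ι} (hv : LinearIndepOn R v (s ∪ t)) :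
    Submodule.span R (v '' (s ∩ t)) = Submodule.span R (v '' s) ⊓ Submodule.span R (v '' t) := by
  refine le_antisymm (le_inf (Submodule.span_mono (Set.image_mono Set.inter_subset_left))
    (Submodule.span_mono (Set.image_mono Set.inter_subset_right))) ?_
  rintro x ⟨hxs, hxt⟩
  simp only [SetLike.mem_coe, Finsupp.mem_span_image_iff_linearCombination] at hxs hxt ⊢
  obtain ⟨f, hf, rfl⟩ := hxs
  obtain ⟨g, hg, hfg⟩ := hxt
  obtain rfl : g = f := linearIndepOn_iffₛ.mp hv g
    (Finsupp.supported_mono (M := R) (R := R) Set.subset_union_right hg)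
    f (Finsupp.supported_mono (M := R) (R := R) Set.subset_union_left hf) hfg
  exact ⟨g, (Finsupp.supported_inter (M := R) (R := R) s t).ge ⟨hf, hg⟩, rfl⟩

lemma LinIndepSet.linearIndepOn_rep {n : ℕ} {S : Finset (PS K n)} (hS : LinIndepSet K S) :
    LinearIndepOn K Projectivization.rep (S : Set (PS K n)) := by
  rw [LinearIndepOn, linearIndependent_iff_card_eq_finrank_span, ← Set.image_eq_range]
  exact (Fintype.card_coe S).trans hS.symm

lemma LinIndepSet.spanSet_inter {n : ℕ} [DecidableEq (PS K n)] {A B : Finset (PS K n)}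
    (hAB : LinIndepSet K (A ∪ B)) :
    spanSet K (↑(A ∩ B) : Set (PS K n)) = spanSet K ↑A ∩ spanSet K ↑B := by
  have hli := hAB.linearIndepOn_rep
  rw [Finset.coe_union] at hli
  ext p
  simp only [spanSet, projSpan, Finset.coe_inter, hli.span_image_inter_eq, Set.mem_ofPred_eq,
    Set.mem_inter_iff, Submodule.mem_inf]

theorem statement3 (n : ℕ) [DecidableEq (PS K n)] (A B : Finset (PS K n)) (q : PS K n)
    (hqA : q ∈ spanSet K (A : Set (PS K n))) (hqB : q ∈ spanSet K (B : Set (PS K n)))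
    (hmin : ∀ S : Finset (PS K n), S ⊆ A ∪ B → q ∈ spanSet K (S : Set (PS K n)) →
      A.card ≤ S.card ∧ B.card ≤ S.card)
    (hAB : LinIndepSet K (A ∪ B)) : A = B := by
  have hq : q ∈ spanSet K (↑(A ∩ B) : Set (PS K n)) := hAB.spanSet_inter K ▸ ⟨hqA, hqB⟩
  obtain ⟨hA, hB⟩ := hmin (A ∩ B) Finset.inter_subset_union hq
  calc A = A ∩ B := (Finset.eq_of_subset_of_card_le Finset.inter_subset_left hA).symm
    _ = B := Finset.eq_of_subset_of_card_le Finset.inter_subset_right hB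

end Dep
end
end
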